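/- Assume a random walk with absorption time τ and zero-crossing times T_0 = 0 < T_1 < T_2 < … satisfies: (i) P_x(τ ≥ T_k) ≤ c γ^k for all x ∈ ℝ, k ≥ 0, with c > 0, γ ∈ (0,1); (ii) the classical tail bound P_x(T_1 > n) ≤ c(|x|+1)n^{-1/2}; (iii) E_x[|H_k|; τ ≥ T_k] ≤ c γ^k (|x|+1) where H_k = S_{T_k}. Then there is a constant C > 0 such that P_x(τ > n) ≤ C(|x|+1)n^{-1/2} for all x ∈ ℝ and n ≥ 1. -/

import Mathlib

/-!
Split the time budget `n` geometrically over the excursions between zero crossings: the `j`-th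
excursion gets `m j ≈ n (1 - γ) γ ^ j` steps, for `j` up to the first `k` with
`n (1 - γ) γ ^ k < 1`. Surviving `k` crossings costs `c γ ^ k = O(1 / n)` by (C1), and by the
tail bound and the moment bound the `j`-th excursion contributes
`c² γ ^ j (|x| + 1) / √(m j) = O(√γ ^ j (|x| + 1) / √n)`, which sums geometrically.
-/

open MeasureTheory ENNReal

lemma exists_geometric_time_split {γ : ℝ} (hγ0 : 0 ≤ γ) (hγ1 : γ < 1) {n : ℕ} (hn : 1 ≤ n) :
    ∃ (k : ℕ) (m : ℕ → ℕ), ∑ j ∈ Finset.range k, m j ≤ n ∧ n * (1 - γ) * γ ^ k < 1 ∧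
      ∀ j < k, 1 ≤ m j ∧ n * (1 - γ) * γ ^ j ≤ 2 * m j := by
  classical
  set N : ℝ := n * (1 - γ) with hN_def
  have hN : 0 < N := mul_pos (by exact_mod_cast hn) (by linarith)
  have hex : ∃ k, N * γ ^ k < 1 := by
    obtain ⟨k, hk⟩ := exists_pow_lt_of_lt_one (inv_pos.2 hN) hγ1
    exact ⟨k, by rwa [← lt_inv_mul_iff₀ hN, mul_one]⟩
  obtain ⟨k, hk, hmin⟩ : ∃ k, N * γ ^ k < 1 ∧ ∀ j < k, 1 ≤ N * γ ^ j :=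
    ⟨Nat.find hex, Nat.find_spec hex, fun j hj => not_lt.1 (Nat.find_min hex hj)⟩
  refine ⟨k, fun j => ⌊N * γ ^ j⌋₊, ?_, hk, fun j hj => ?_⟩
  · have hsum : ∑ j ∈ Finset.range k, (⌊N * γ ^ j⌋₊ : ℝ) ≤ n :=
      calc ∑ j ∈ Finset.range k, (⌊N * γ ^ j⌋₊ : ℝ)
          ≤ ∑ j ∈ Finset.range k, N * γ ^ j :=
            Finset.sum_le_sum fun j _ => Nat.floor_le (by positivity)
        _ = n * (1 - γ ^ k) := by rw [← Finset.mul_sum, hN_def, mul_assoc, mul_neg_geom_sum]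
        _ ≤ n := mul_le_of_le_one_right (by positivity) (by linarith [pow_nonneg hγ0 k])
    exact_mod_cast hsum
  · have hfloor : 1 ≤ ⌊N * γ ^ j⌋₊ := (Nat.one_le_floor_iff _).2 (hmin j hj)
    refine ⟨hfloor, ?_⟩
    have hlt := Nat.lt_floor_add_one (N * γ ^ j)
    have hfloor' : (1 : ℝ) ≤ ⌊N * γ ^ j⌋₊ := by exact_mod_cast hfloor
    linarith

lemma lintegral_le_of_le_ofReal_mul_div {ν : Measure ℝ} {f : ℝ → ℝ≥0∞} {a t B : ℝ}
    (ha : 0 ≤ a) (ht : 0 ≤ t) (hf : ∀ y, f y ≤ ENNReal.ofReal (a * (|y| + 1) / t))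
    (hν : ∫⁻ y, ENNReal.ofReal (|y| + 1) ∂ν ≤ ENNReal.ofReal B) :
    ∫⁻ y, f y ∂ν ≤ ENNReal.ofReal (a / t * B) :=
  calc ∫⁻ y, f y ∂ν ≤ ∫⁻ y, ENNReal.ofReal (a / t) * ENNReal.ofReal (|y| + 1) ∂ν :=
        lintegral_mono fun y => (hf y).trans_eq <| by
          rw [← ENNReal.ofReal_mul (by positivity), div_mul_eq_mul_div]
    _ = ENNReal.ofReal (a / t) * ∫⁻ y, ENNReal.ofReal (|y| + 1) ∂ν :=
        lintegral_const_mul' _ _ ENNReal.ofReal_ne_top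
    _ ≤ ENNReal.ofReal (a / t) * ENNReal.ofReal B := by gcongr
    _ = ENNReal.ofReal (a / t * B) := (ENNReal.ofReal_mul (by positivity)).symm

lemma pow_div_sqrt_le_of_mul_pow_le {γ N M : ℝ} (hγ : 0 < γ) (hN : 0 < N) {j : ℕ}
    (h : N * γ ^ j ≤ 2 * M) : γ ^ j / √M ≤ √2 / √N * √γ ^ j := by
  set s := √γ ^ j
  have hs : 0 < s := pow_pos (Real.sqrt_pos.2 hγ) j
  have hγs : γ ^ j = s ^ 2 := by rw [← pow_mul, mul_comm, pow_mul, Real.sq_sqrt hγ.le]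
  have hsqrt : s * √N ≤ √2 * √M := by
    calc s * √N = √(N * γ ^ j) := by rw [hγs, Real.sqrt_mul hN.le, Real.sqrt_sq hs.le, mul_comm]
      _ ≤ √(2 * M) := Real.sqrt_le_sqrt h
      _ = √2 * √M := Real.sqrt_mul zero_le_two M
  have hM : 0 < √M := by
    have : 0 < √2 * √M := lt_of_lt_of_le (by positivity) hsqrt
    exact pos_of_mul_pos_right this (Real.sqrt_nonneg 2)
  rw [hγs, div_mul_eq_mul_div, div_le_div_iff₀ hM (Real.sqrt_pos.2 hN)]
  calc s ^ 2 * √N = s * (s * √N) := by ring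
    _ ≤ s * (√2 * √M) := by gcongr
    _ = √2 * s * √M := by ring

lemma lintegral_le_of_time_budget {ν : Measure ℝ} {f : ℝ → ℝ≥0∞} {c γ r M : ℝ} {n j : ℕ}
    (hc : 0 ≤ c) (hγ : 0 < γ) (hγ1 : γ < 1) (hr : 0 ≤ r) (hn : 1 ≤ n)
    (hf : ∀ y, f y ≤ ENNReal.ofReal (c * (|y| + 1) / √M))
    (hν : ∫⁻ y, ENNReal.ofReal (|y| + 1) ∂ν ≤ ENNReal.ofReal (c * γ ^ j * r))
    (hbudget : n * (1 - γ) * γ ^ j ≤ 2 * M) :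
    ∫⁻ y, f y ∂ν ≤ ENNReal.ofReal (√2 * c ^ 2 / √(1 - γ) * r / √n * √γ ^ j) := by
  have hn0 : (0 : ℝ) < n := by exact_mod_cast hn
  refine (lintegral_le_of_le_ofReal_mul_div hc (Real.sqrt_nonneg _) hf hν).trans
    (ENNReal.ofReal_le_ofReal ?_)
  calc c / √M * (c * γ ^ j * r) = c ^ 2 * r * (γ ^ j / √M) := by ring
    _ ≤ c ^ 2 * r * (√2 / √(n * (1 - γ)) * √γ ^ j) := by
        gcongr; exact pow_div_sqrt_le_of_mul_pow_le hγ (mul_pos hn0 (sub_pos.2 hγ1)) hbudget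
    _ = √2 * c ^ 2 / √(1 - γ) * r / √n * √γ ^ j := by rw [Real.sqrt_mul hn0.le]; ring

lemma mul_le_mul_div_sqrt_of_mul_lt_one {c d g r : ℝ} {n : ℕ} (hc : 0 ≤ c) (hd : 0 < d)
    (hg : 0 ≤ g) (hr : 1 ≤ r) (hn : 1 ≤ n) (h : n * d * g < 1) : c * g ≤ c / d * r / √n := by
  have hsn : 0 < √n := Real.sqrt_pos.2 (by exact_mod_cast hn)
  have hsqrt : √n ≤ n := Real.sqrt_le_self_iff.2 (Or.inr (by exact_mod_cast hn))
  have hgdn : g * d * √n ≤ 1 := by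
    calc g * d * √n ≤ g * d * n := by gcongr
      _ ≤ 1 := by linarith
  calc c * g = c / (d * √n) * (g * d * √n) := by field_simp
    _ ≤ c / (d * √n) * r := by gcongr; linarith
    _ = c / d * r / √n := by rw [div_mul_eq_div_div_swap]; ring

lemma sum_ofReal_mul_pow_le {q A : ℝ} (hq0 : 0 ≤ q) (hq1 : q < 1) (hA : 0 ≤ A) (k : ℕ) :
    ∑ j ∈ Finset.range k, ENNReal.ofReal (A * q ^ j) ≤ ENNReal.ofReal (A / (1 - q)) := by
  rw [← ENNReal.ofReal_sum_of_nonneg fun j _ => mul_nonneg hA (pow_nonneg hq0 j),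
    ← Finset.mul_sum, div_eq_mul_one_div]
  refine ENNReal.ofReal_le_ofReal (mul_le_mul_of_nonneg_left ?_ hA)
  rw [Finset.range_eq_Ico]
  simpa using geom_sum_Ico_le_of_lt_one hq0 hq1 (m := 0) (n := k)

/-- Here `ptau x n = P_x(τ > n)`, `pT1 y n = P_y(T₁ > n)`, and `μ x k` is the subprobability law
of `H_k = S_{T_k}` under `P_x` restricted to `{τ ≥ T_k}`. -/
theorem stmt12_general (ptau : ℝ → ℕ → ℝ≥0∞) (pT1 : ℝ → ℕ → ℝ≥0∞)
    (μ : ℝ → ℕ → Measure ℝ)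
    (c γ : ℝ) (hc : 0 < c) (hγ : 0 < γ) (hγ1 : γ < 1)
    (hC1 : ∀ x : ℝ, ∀ k : ℕ, μ x k Set.univ ≤ ENNReal.ofReal (c * γ ^ k))
    (hT1 : ∀ y : ℝ, ∀ n : ℕ, 1 ≤ n →
      pT1 y n ≤ ENNReal.ofReal (c * (|y| + 1) / Real.sqrt n))
    (hH : ∀ x : ℝ, ∀ k : ℕ,
      (∫⁻ y, ENNReal.ofReal (|y| + 1) ∂(μ x k)) ≤ ENNReal.ofReal (c * γ ^ k * (|x| + 1)))
    (hdecomp : ∀ x : ℝ, ∀ n k : ℕ, ∀ m : ℕ → ℕ,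
      (∑ j ∈ Finset.range k, m j) ≤ n →
      ptau x n ≤ μ x k Set.univ + ∑ j ∈ Finset.range k, ∫⁻ y, pT1 y (m j) ∂(μ x j)) :
    ∃ C : ℝ, 0 < C ∧ ∀ x : ℝ, ∀ n : ℕ, 1 ≤ n →
      ptau x n ≤ ENNReal.ofReal (C * (|x| + 1) / Real.sqrt n) := by
  have h1γ : 0 < 1 - γ := sub_pos.2 hγ1
  have hs1 : √γ < 1 := by simpa using Real.sqrt_lt_sqrt hγ.le hγ1
  set A := √2 * c ^ 2 / √(1 - γ)
  refine ⟨c / (1 - γ) + A / (1 - √γ), by positivity, fun x n hn => ?_⟩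
  have hx : 1 ≤ |x| + 1 := le_add_of_nonneg_left (abs_nonneg x)
  obtain ⟨k, m, hm_sum, hk, hm⟩ := exists_geometric_time_split hγ.le hγ1 hn
  have hfirst : μ x k Set.univ ≤ ENNReal.ofReal (c / (1 - γ) * (|x| + 1) / √n) :=
    (hC1 x k).trans <| ENNReal.ofReal_le_ofReal <|
      mul_le_mul_div_sqrt_of_mul_lt_one hc.le h1γ (by positivity) hx hn hk
  have hterm : ∀ j ∈ Finset.range k,
      ∫⁻ y, pT1 y (m j) ∂(μ x j) ≤ ENNReal.ofReal (A * (|x| + 1) / √n * √γ ^ j) := fun j hj =>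
    have hmj := hm j (Finset.mem_range.1 hj)
    lintegral_le_of_time_budget hc.le hγ hγ1 (by positivity) hn (fun y => hT1 y (m j) hmj.1)
      (hH x j) hmj.2
  calc ptau x n ≤ μ x k Set.univ + ∑ j ∈ Finset.range k, ∫⁻ y, pT1 y (m j) ∂(μ x j) :=
        hdecomp x n k m hm_sum
    _ ≤ ENNReal.ofReal (c / (1 - γ) * (|x| + 1) / √n) +
          ∑ j ∈ Finset.range k, ENNReal.ofReal (A * (|x| + 1) / √n * √γ ^ j) :=
        add_le_add hfirst (Finset.sum_le_sum hterm)
    _ ≤ ENNReal.ofReal (c / (1 - γ) * (|x| + 1) / √n) +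
          ENNReal.ofReal (A * (|x| + 1) / √n / (1 - √γ)) := by
        gcongr
        exact sum_ofReal_mul_pow_le (Real.sqrt_nonneg γ) hs1 (by positivity) k
    _ = ENNReal.ofReal ((c / (1 - γ) + A / (1 - √γ)) * (|x| + 1) / √n) := by
        rw [← ENNReal.ofReal_add (by positivity) (by positivity)]
        congr 1
        ring

/-- A priori persistence estimate (Lemma 3). Here `ptau x n = P_x(τ > n)`,
`pT1 y n = P_y(T₁ > n)`, and `μ x k` is the subprobability law of `H_k = S_{T_k}` under
`P_x` restricted to `{τ ≥ T_k}`. Assuming (C1), Eppel's tail bound, the moment bound of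
Lemma 2, and the strong Markov decomposition, one gets `P_x(τ > n) ≤ C(|x|+1)n^{-1/2}`. -/
theorem stmt12 (ptau : ℝ → ℕ → ℝ≥0∞) (pT1 : ℝ → ℕ → ℝ≥0∞)
    (μ : ℝ → ℕ → Measure ℝ)
    (c γ : ℝ) (hc : 0 < c) (hγ : 0 < γ) (hγ1 : γ < 1)
    (hptau1 : ∀ x n, ptau x n ≤ 1)
    (hC1 : ∀ x : ℝ, ∀ k : ℕ, μ x k Set.univ ≤ ENNReal.ofReal (c * γ ^ k))
    (hT1 : ∀ y : ℝ, ∀ n : ℕ, 1 ≤ n →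
      pT1 y n ≤ ENNReal.ofReal (c * (|y| + 1) / Real.sqrt n))
    (hH : ∀ x : ℝ, ∀ k : ℕ,
      (∫⁻ y, ENNReal.ofReal (|y| + 1) ∂(μ x k)) ≤ ENNReal.ofReal (c * γ ^ k * (|x| + 1)))
    (hdecomp : ∀ x : ℝ, ∀ n k : ℕ, ∀ m : ℕ → ℕ,
      (∑ j ∈ Finset.range k, m j) ≤ n →
      ptau x n ≤ μ x k Set.univ + ∑ j ∈ Finset.range k, ∫⁻ y, pT1 y (m j) ∂(μ x j)) :
    ∃ C : ℝ, 0 < C ∧ ∀ x : ℝ, ∀ n : ℕ, 1 ≤ n →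
      ptau x n ≤ ENNReal.ofReal (C * (|x| + 1) / Real.sqrt n) :=
  stmt12_general ptau pT1 μ c γ hc hγ hγ1 hC1 hT1 hH hdecomp
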